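/- As p → ∞ through the primes, the ratio N_p(g)/N_p(2) of the number of gaps equal to g in the cycle of gaps 𝒢(p#) to the number of gaps equal to 2 in 𝒢(p#) converges to 4/3 for g = 10 and g = 20, to 6/5 for g = 14 and g = 28, to 10/9 for g = 22, and to 12/11 for g = 26. -/

import Mathlib

open Finset

/-- `b` is the next totative of `P` after `a`: `a < b`, `b` is coprime to `P`,
and no integer strictly between `a` and `b` is coprime to `P`. -/
def IsNextTot (P a b : ℕ) : Prop :=
  a < b ∧ Nat.Coprime b P ∧ ∀ x, a < x → x < b → ¬ Nat.Coprime x P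

/-- Starting at `r`, the successive totatives of `P` after `r` occur at the
successive partial sums of the list of gaps `c`. -/
def MatchesGaps (P : ℕ) : ℕ → List ℕ → Prop
  | _, [] => True
  | r, c :: cs => IsNextTot P r (r + c) ∧ MatchesGaps P (r + c) cs

open scoped Classical in
/-- `Ncount p s` : the number of (cyclic) occurrences of the constellation `s`
in the cycle of gaps `𝒢(p#)`.  Since the pattern of coprimality to `p#` is
periodic with period `p#`, this is the number of totatives `r ∈ [1, p#]` of `p#`
at which the gap pattern `s` begins. -/
noncomputable def Ncount (p : ℕ) (s : List ℕ) : ℕ :=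
  ((Finset.Icc 1 (primorial p)).filter
    (fun r => Nat.Coprime r (primorial p) ∧ MatchesGaps (primorial p) r s)).card

open scoped Classical in
/-- `nCount p g j` : the number of (cyclic) occurrences in `𝒢(p#)` of
constellations of length `j` with sum `g` (the driving terms of length `j`
for the gap `g`). -/
noncomputable def nCount (p g j : ℕ) : ℕ :=
  ((Finset.Icc 1 (primorial p)).filter
    (fun r => Nat.Coprime r (primorial p) ∧
      ∃ c : List ℕ, c.length = j ∧ c.sum = g ∧ MatchesGaps (primorial p) r c)).card

/-!
Write `Z(n, S) = coprimeShiftCount S n` for the number of `r` modulo `n` such that every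
`r + s` with `s ∈ S` is coprime to `n`. By the Chinese remainder theorem `Z(·, S)` is
multiplicative, and at a prime `q` it equals `q - #(S mod q)`.

A gap `g` starting at `r` is a pair of totatives `r, r + g` with no totative in between. Hence
`N_p(2) = Z(p#, {0, 2})` (the middle number is even) and
`Z(p#, {0, g}) - ∑_{0 < t < g} Z(p#, {0, t, g}) ≤ N_p(g) ≤ Z(p#, {0, g})`.
Comparing Euler factors prime by prime, for even `g ≤ p` we get
`Z(p#, {0, g}) = gapRatio g · Z(p#, {0, 2})` with `gapRatio g = ∏_{q ∣ g odd} (q - 1)/(q - 2)`,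
while `Z(p#, {0, t, g}) ≤ g# · ∏_{q ≤ p} (1 - 1/q) · Z(p#, {0, 2})` for `0 < t < g`, and this
product tends to `0` because `∑ 1/q` diverges.
-/

open Filter Topology

def coprimeShiftCount (S : Finset ℕ) : ArithmeticFunction ℕ where
  toFun n := #{r ∈ Icc 1 n | ∀ s ∈ S, (r + s).Coprime n}
  map_zero' := rfl

theorem coprimeShiftCount_apply (S : Finset ℕ) (n : ℕ) :
    coprimeShiftCount S n = #{r ∈ Icc 1 n | ∀ s ∈ S, (r + s).Coprime n} :=
  rfl

theorem card_filter_Icc_one_natCast (n : ℕ) [NeZero n] (P : ZMod n → Prop) [DecidablePred P] :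
    #{r ∈ Icc 1 n | P (r : ℕ)} = #{a : ZMod n | P a} := by
  rw [← Ico_add_one_right_eq_Icc, add_comm,
    Nat.filter_Ico_card_eq_of_periodic _ _ (fun r : ℕ => P r) fun r => by simp,
    Nat.count_eq_card_filter_range]
  refine card_nbij' (↑) ZMod.val (fun r hr => by simpa using (mem_filter.mp hr).2)
    (fun a ha => ?_)
    (fun r hr => ZMod.val_natCast_of_lt (mem_range.mp (mem_filter.mp hr).1))
    (fun a _ => ZMod.natCast_zmod_val a)
  simpa [ZMod.val_lt] using ha

theorem coprimeShiftCount_eq_card_zmod (S : Finset ℕ) (n : ℕ) [NeZero n] :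
    coprimeShiftCount S n = #{a : ZMod n | ∀ s ∈ S, IsUnit (a + s)} := by
  rw [coprimeShiftCount_apply, ← card_filter_Icc_one_natCast]
  congr! 3 with r - s -
  rw [← ZMod.isUnit_iff_coprime, Nat.cast_add]

theorem isMultiplicative_coprimeShiftCount (S : Finset ℕ) :
    (coprimeShiftCount S).IsMultiplicative := by
  refine ⟨by simp [coprimeShiftCount_apply], fun {m n} hmn => ?_⟩
  rcases eq_or_ne m 0 with rfl | hm
  · simp
  rcases eq_or_ne n 0 with rfl | hn
  · simp
  have : NeZero m := ⟨hm⟩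
  have : NeZero n := ⟨hn⟩
  have : NeZero (m * n) := ⟨mul_ne_zero hm hn⟩
  simp only [coprimeShiftCount_eq_card_zmod, ← card_product, ← filter_product]
  refine card_equiv (ZMod.chineseRemainder hmn).toEquiv fun a => ?_
  simp [← isUnit_map_iff (ZMod.chineseRemainder hmn) (a + _), Prod.isUnit_iff, forall_and]

theorem coprimeShiftCount_primorial (S : Finset ℕ) (p : ℕ) :
    coprimeShiftCount S (primorial p) = ∏ q ∈ Nat.primesLE p, coprimeShiftCount S q :=
  (isMultiplicative_coprimeShiftCount S).map_prod_of_prime _ fun _ => Nat.prime_of_mem_primesLE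

section Prime

variable {q : ℕ} (hq : q.Prime)
include hq

theorem coprimeShiftCount_prime (S : Finset ℕ) :
    coprimeShiftCount S q = q - #(S.image ((↑) : ℕ → ZMod q)) := by
  have : Fact q.Prime := ⟨hq⟩
  have h := card_compl ((S.image ((↑) : ℕ → ZMod q)).image Neg.neg)
  rw [ZMod.card, card_image_of_injective _ neg_injective] at h
  rw [coprimeShiftCount_eq_card_zmod, ← h]
  congr 1
  ext a
  simp [isUnit_iff_ne_zero, add_eq_zero_iff_neg_eq']

theorem coprimeShiftCount_prime_le_sub_one {S : Finset ℕ} (hS : S.Nonempty) :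
    coprimeShiftCount S q ≤ q - 1 := by
  rw [coprimeShiftCount_prime hq]
  exact Nat.sub_le_sub_left (hS.image _).card_pos q

theorem coprimeShiftCount_prime_of_forall_lt {S : Finset ℕ} (hS : ∀ s ∈ S, s < q) :
    coprimeShiftCount S q = q - #S := by
  rw [coprimeShiftCount_prime hq, card_image_of_injOn fun a ha b hb hab => ?_]
  rw [ZMod.natCast_eq_natCast_iff', Nat.mod_eq_of_lt (hS a ha), Nat.mod_eq_of_lt (hS b hb)] at hab
  exact hab

theorem coprimeShiftCount_prime_pair (g : ℕ) :
    coprimeShiftCount {0, g} q = q - if q ∣ g then 1 else 2 := by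
  rw [coprimeShiftCount_prime hq, image_insert, image_singleton, Nat.cast_zero,
    card_insert_eq_ite]
  simp [eq_comm, ZMod.natCast_eq_zero_iff]

theorem coprimeShiftCount_prime_pair_two_pos : 0 < coprimeShiftCount {0, 2} q := by
  rw [coprimeShiftCount_prime_pair hq]
  have := hq.two_le
  split_ifs with h
  · omega
  · have : q ≠ 2 := by rintro rfl; exact h dvd_rfl
    omega

end Prime

theorem matchesGaps_singleton {n r g : ℕ} : MatchesGaps n r [g] ↔ IsNextTot n r (r + g) := by
  simp [MatchesGaps]

theorem Ncount_singleton_le (p g : ℕ) :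
    Ncount p [g] ≤ coprimeShiftCount {0, g} (primorial p) := by
  classical
  refine card_le_card (monotone_filter_right _ fun r _ ⟨hr, hnext⟩ => ?_)
  simp only [mem_insert, mem_singleton, forall_eq_or_imp, forall_eq, add_zero]
  exact ⟨hr, (matchesGaps_singleton.mp hnext).2.1⟩

open scoped Classical in
theorem coprimeShiftCount_le_Ncount_add (p : ℕ) {g : ℕ} (hg : 0 < g) :
    coprimeShiftCount {0, g} (primorial p) ≤
      Ncount p [g] + ∑ t ∈ Ioo 0 g, coprimeShiftCount {0, t, g} (primorial p) := by
  set n := primorial p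
  let T (t : ℕ) : Finset ℕ := {r ∈ Icc 1 n | ∀ s ∈ ({0, t, g} : Finset ℕ), (r + s).Coprime n}
  have hcover : {r ∈ Icc 1 n | ∀ s ∈ ({0, g} : Finset ℕ), (r + s).Coprime n} ⊆
      {r ∈ Icc 1 n | r.Coprime n ∧ MatchesGaps n r [g]} ∪ (Ioo 0 g).biUnion T := by
    intro r hr
    simp only [mem_filter, mem_insert, mem_singleton, forall_eq_or_imp, forall_eq, add_zero] at hr
    obtain ⟨hrn, hr, hrg⟩ := hr
    by_cases hmid : ∃ t ∈ Ioo 0 g, (r + t).Coprime n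
    · obtain ⟨t, ht, hrt⟩ := hmid
      refine mem_union_right _ (mem_biUnion.mpr ⟨t, ht, mem_filter.mpr ⟨hrn, ?_⟩⟩)
      simp only [mem_insert, mem_singleton, forall_eq_or_imp, forall_eq, add_zero]
      exact ⟨hr, hrt, hrg⟩
    · refine mem_union_left _ (mem_filter.mpr ⟨hrn, hr, ?_⟩)
      refine matchesGaps_singleton.mpr ⟨by omega, hrg, fun x hrx hxg hx => hmid ?_⟩
      exact ⟨x - r, mem_Ioo.mpr ⟨by omega, by omega⟩, by rwa [Nat.add_sub_cancel' hrx.le]⟩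
  exact (card_le_card hcover).trans
    ((card_union_le _ _).trans (add_le_add le_rfl card_biUnion_le))

theorem Ncount_two {p : ℕ} (hp : 2 ≤ p) :
    Ncount p [2] = coprimeShiftCount {0, 2} (primorial p) := by
  have h2 : 2 ∣ primorial p := Nat.prime_two.dvd_primorial_iff.mpr hp
  refine (Ncount_singleton_le p 2).antisymm ?_
  classical
  rw [coprimeShiftCount_apply, Ncount]
  refine card_le_card (monotone_filter_right _ fun r _ hr => ?_)
  simp only [mem_insert, mem_singleton, forall_eq_or_imp, forall_eq, add_zero] at hr
  obtain ⟨hr, hr2⟩ := hr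
  refine ⟨hr, matchesGaps_singleton.mpr ⟨by omega, hr2, fun x hrx hx2 hx => ?_⟩⟩
  obtain rfl : x = r + 1 := by omega
  exact Nat.not_odd_iff_even.mpr (hr.coprime_dvd_right h2).odd_of_right.add_one
    (hx.coprime_dvd_right h2).odd_of_right

noncomputable def gapRatio (g : ℕ) : ℝ :=
  ∏ q ∈ g.primeFactors.erase 2, ((q : ℝ) - 1) / (q - 2)

theorem coprimeShiftCount_prime_pair_eq {q g : ℕ} (hq : q.Prime) (hg : Even g) (hg0 : g ≠ 0) :
    (coprimeShiftCount {0, g} q : ℝ) =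
      (if q ∈ g.primeFactors.erase 2 then ((q : ℝ) - 1) / (q - 2) else 1) *
        coprimeShiftCount {0, 2} q := by
  rw [coprimeShiftCount_prime_pair hq, coprimeShiftCount_prime_pair hq]
  rcases eq_or_ne q 2 with rfl | hq2
  · simp [even_iff_two_dvd.mp hg]
  have hq2' : ¬q ∣ 2 := (Nat.prime_dvd_prime_iff_eq hq Nat.prime_two).not.mpr hq2
  by_cases hqg : q ∣ g
  · have : 3 ≤ q := by have := hq.two_le; omega
    have hq2r : (q : ℝ) - 2 ≠ 0 := by rw [sub_ne_zero]; exact_mod_cast hq2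
    rw [if_pos hqg, if_neg hq2', if_pos (by simp [hq, hqg, hq2, hg0])]
    push_cast [Nat.cast_sub (by omega : 1 ≤ q), Nat.cast_sub (by omega : 2 ≤ q)]
    field_simp
  · rw [if_neg hqg, if_neg hq2', if_neg (by simp [hqg]), one_mul]

theorem coprimeShiftCount_pair_eq_gapRatio_mul {p g : ℕ} (hg : Even g) (hg0 : g ≠ 0)
    (hgp : g ≤ p) :
    (coprimeShiftCount {0, g} (primorial p) : ℝ) =
      gapRatio g * coprimeShiftCount {0, 2} (primorial p) := by
  have hsub : g.primeFactors.erase 2 ⊆ Nat.primesLE p := fun q hq => by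
    simp only [mem_erase, Nat.mem_primeFactors] at hq
    exact Nat.mem_primesLE.mpr
      ⟨(Nat.le_of_dvd (Nat.pos_of_ne_zero hg0) hq.2.2.1).trans hgp, hq.2.1⟩
  simp only [coprimeShiftCount_primorial, Nat.cast_prod]
  rw [prod_congr rfl fun q hq =>
      coprimeShiftCount_prime_pair_eq (Nat.prime_of_mem_primesLE hq) hg hg0,
    prod_mul_distrib, prod_ite_mem, inter_eq_right.mpr hsub, gapRatio]

theorem one_sub_inv_prime_nonneg {q : ℕ} (hq : q.Prime) : 0 ≤ 1 - (q : ℝ)⁻¹ :=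
  sub_nonneg.mpr (inv_le_one_of_one_le₀ (mod_cast hq.one_le))

theorem coprimeShiftCount_prime_triple_le {q t g : ℕ} (hq : q.Prime) (ht : 0 < t) (htg : t < g) :
    (coprimeShiftCount {0, t, g} q : ℝ) ≤
      (if q ≤ g then (q : ℝ) else 1) * (1 - (q : ℝ)⁻¹) * coprimeShiftCount {0, 2} q := by
  have hq0 : (0 : ℝ) < q := by exact_mod_cast hq.pos
  have h2 : (1 : ℝ) ≤ coprimeShiftCount {0, 2} q := by
    exact_mod_cast coprimeShiftCount_prime_pair_two_pos hq
  split_ifs with hqg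
  · calc (coprimeShiftCount {0, t, g} q : ℝ) ≤ (q - 1 : ℕ) := by
          exact_mod_cast coprimeShiftCount_prime_le_sub_one hq (insert_nonempty _ _)
      _ = q * (1 - (q : ℝ)⁻¹) := by
          rw [Nat.cast_sub hq.one_le, mul_one_sub, mul_inv_cancel₀ hq0.ne']; simp
      _ ≤ q * (1 - (q : ℝ)⁻¹) * coprimeShiftCount {0, 2} q :=
          le_mul_of_one_le_right (mul_nonneg hq0.le (one_sub_inv_prime_nonneg hq)) h2
  · have h3 : coprimeShiftCount {0, t, g} q = q - 3 := by
      rw [coprimeShiftCount_prime_of_forall_lt hq (by simp; omega), card_eq_three.mpr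
        ⟨0, t, g, by omega, by omega, by omega, rfl⟩]
    have h2 : coprimeShiftCount {0, 2} q = q - 2 := by
      rw [coprimeShiftCount_prime_of_forall_lt hq (by simp; omega), card_pair (by omega)]
    rw [h3, h2, one_mul, Nat.cast_sub (by omega), Nat.cast_sub (by omega)]
    -- `(q - 3) / (q - 2) ≤ (q - 1) / q`, since `q (q - 3) ≤ (q - 1) (q - 2)`
    rw [one_sub_mul, inv_mul_eq_div, le_sub_iff_add_le, ← le_sub_iff_add_le', div_le_iff₀ hq0]
    push_cast
    nlinarith

theorem coprimeShiftCount_triple_le {p t g : ℕ} (ht : 0 < t) (htg : t < g) (hgp : g ≤ p) :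
    (coprimeShiftCount {0, t, g} (primorial p) : ℝ) ≤
      primorial g * (∏ q ∈ Nat.primesLE p, (1 - (q : ℝ)⁻¹)) *
        coprimeShiftCount {0, 2} (primorial p) := by
  have hfilter : {q ∈ Nat.primesLE p | q ≤ g} = Nat.primesLE g := by
    ext q
    simp only [mem_filter, Nat.mem_primesLE]
    constructor
    · exact fun h => ⟨h.2, h.1.2⟩
    · exact fun h => ⟨⟨h.1.trans hgp, h.2⟩, h.1⟩
  rw [coprimeShiftCount_primorial, coprimeShiftCount_primorial, primorial_eq_prod_primesLE g]
  push_cast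
  calc ∏ q ∈ Nat.primesLE p, (coprimeShiftCount {0, t, g} q : ℝ)
      ≤ ∏ q ∈ Nat.primesLE p,
          (if q ≤ g then (q : ℝ) else 1) * (1 - (q : ℝ)⁻¹) * coprimeShiftCount {0, 2} q :=
        prod_le_prod (fun _ _ => Nat.cast_nonneg _)
          fun q hq => coprimeShiftCount_prime_triple_le (Nat.prime_of_mem_primesLE hq) ht htg
    _ = _ := by rw [prod_mul_distrib, prod_mul_distrib, ← prod_filter, hfilter]

theorem tendsto_sum_primesLE_inv :
    Tendsto (fun p => ∑ q ∈ Nat.primesLE p, (q : ℝ)⁻¹) atTop atTop := by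
  have hdiv := (not_summable_iff_tendsto_nat_atTop_of_nonneg fun n =>
    Set.indicator_nonneg (fun n _ => by positivity) n).mp not_summable_one_div_on_primes
  refine (hdiv.comp (tendsto_add_atTop_nat 1)).congr fun p => ?_
  simp [Nat.primesLE_eq_filter_range, sum_filter, Set.indicator_apply]

theorem tendsto_prod_primesLE_one_sub_inv :
    Tendsto (fun p => ∏ q ∈ Nat.primesLE p, (1 - (q : ℝ)⁻¹)) atTop (𝓝 0) := by
  have hexp : Tendsto (fun p => Real.exp (-∑ q ∈ Nat.primesLE p, (q : ℝ)⁻¹)) atTop (𝓝 0) :=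
    Real.tendsto_exp_atBot.comp (tendsto_neg_atTop_atBot.comp tendsto_sum_primesLE_inv)
  have hnonneg (p q : ℕ) (hq : q ∈ Nat.primesLE p) : 0 ≤ 1 - (q : ℝ)⁻¹ :=
    one_sub_inv_prime_nonneg (Nat.prime_of_mem_primesLE hq)
  refine squeeze_zero (fun p => prod_nonneg (hnonneg p)) (fun p => ?_) hexp
  rw [← sum_neg_distrib, Real.exp_sum]
  exact prod_le_prod (hnonneg p) fun q _ => by linarith [Real.add_one_le_exp (-(q : ℝ)⁻¹)]

theorem Ncount_two_pos {p : ℕ} (hp : 2 ≤ p) : 0 < Ncount p [2] := by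
  rw [Ncount_two hp, coprimeShiftCount_primorial]
  exact prod_pos fun q hq => coprimeShiftCount_prime_pair_two_pos (Nat.prime_of_mem_primesLE hq)

section EvenGap

variable {p g : ℕ} (hg : Even g) (hg0 : g ≠ 0) (hgp : g ≤ p)
include hg hg0 hgp

theorem two_le_of_even_le : 2 ≤ p := by
  obtain ⟨k, rfl⟩ := hg
  omega

theorem Ncount_le_gapRatio_mul : (Ncount p [g] : ℝ) ≤ gapRatio g * Ncount p [2] := by
  rw [Ncount_two (two_le_of_even_le hg hg0 hgp),
    ← coprimeShiftCount_pair_eq_gapRatio_mul hg hg0 hgp]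
  exact_mod_cast Ncount_singleton_le p g

theorem sub_mul_Ncount_two_le_Ncount :
    (gapRatio g - g * primorial g * ∏ q ∈ Nat.primesLE p, (1 - (q : ℝ)⁻¹)) * Ncount p [2] ≤
      Ncount p [g] := by
  set E := ∏ q ∈ Nat.primesLE p, (1 - (q : ℝ)⁻¹)
  set Z₂ := (coprimeShiftCount {0, 2} (primorial p) : ℝ)
  have hE : 0 ≤ E :=
    prod_nonneg fun q hq => one_sub_inv_prime_nonneg (Nat.prime_of_mem_primesLE hq)
  rw [Ncount_two (two_le_of_even_le hg hg0 hgp), sub_mul,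
    ← coprimeShiftCount_pair_eq_gapRatio_mul hg hg0 hgp, sub_le_iff_le_add]
  calc (coprimeShiftCount {0, g} (primorial p) : ℝ)
      ≤ Ncount p [g] + ∑ t ∈ Ioo 0 g, (coprimeShiftCount {0, t, g} (primorial p) : ℝ) := by
        exact_mod_cast coprimeShiftCount_le_Ncount_add p (Nat.pos_of_ne_zero hg0)
    _ ≤ Ncount p [g] + ∑ t ∈ Ioo 0 g, primorial g * E * Z₂ := by
        gcongr with t ht
        exact coprimeShiftCount_triple_le (mem_Ioo.mp ht).1 (mem_Ioo.mp ht).2 hgp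
    _ ≤ Ncount p [g] + g * primorial g * E * Z₂ := by
        rw [sum_const, Nat.card_Ioo, nsmul_eq_mul, ← mul_assoc, ← mul_assoc]
        gcongr
        exact_mod_cast Nat.sub_le g 1
    _ = _ := by ring

end EvenGap

theorem tendsto_Ncount_div_Ncount_two {g : ℕ} (hg : Even g) (hg0 : g ≠ 0) :
    Tendsto (fun p => (Ncount p [g] : ℝ) / Ncount p [2]) atTop (𝓝 (gapRatio g)) := by
  have hlower : Tendsto (fun p => gapRatio g - g * primorial g *
      ∏ q ∈ Nat.primesLE p, (1 - (q : ℝ)⁻¹)) atTop (𝓝 (gapRatio g)) := by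
    simpa using tendsto_const_nhds.sub
      (tendsto_prod_primesLE_one_sub_inv.const_mul ((g : ℝ) * primorial g))
  refine tendsto_of_tendsto_of_tendsto_of_le_of_le' hlower tendsto_const_nhds ?_ ?_ <;>
    filter_upwards [eventually_ge_atTop g] with p hgp <;>
    have hpos : (0 : ℝ) < Ncount p [2] := mod_cast Ncount_two_pos (two_le_of_even_le hg hg0 hgp)
  · exact (le_div_iff₀ hpos).mpr (sub_mul_Ncount_two_le_Ncount hg hg0 hgp)
  · exact (div_le_iff₀ hpos).mpr (Ncount_le_gapRatio_mul hg hg0 hgp)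

theorem ratio_tendsto_values :
    (∀ g ∈ ({10, 20} : Finset ℕ),
      Filter.Tendsto (fun p : ℕ => (Ncount p [g] : ℝ) / (Ncount p [2] : ℝ))
        (Filter.atTop ⊓ Filter.principal {p : ℕ | p.Prime}) (nhds (4 / 3))) ∧
    (∀ g ∈ ({14, 28} : Finset ℕ),
      Filter.Tendsto (fun p : ℕ => (Ncount p [g] : ℝ) / (Ncount p [2] : ℝ))
        (Filter.atTop ⊓ Filter.principal {p : ℕ | p.Prime}) (nhds (6 / 5))) ∧
    Filter.Tendsto (fun p : ℕ => (Ncount p [22] : ℝ) / (Ncount p [2] : ℝ))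
      (Filter.atTop ⊓ Filter.principal {p : ℕ | p.Prime}) (nhds (10 / 9)) ∧
    Filter.Tendsto (fun p : ℕ => (Ncount p [26] : ℝ) / (Ncount p [2] : ℝ))
      (Filter.atTop ⊓ Filter.principal {p : ℕ | p.Prime}) (nhds (12 / 11)) := by
  have key (g : ℕ) (hg : Even g) (hg0 : g ≠ 0) {c : ℝ} (hc : gapRatio g = c) :
      Tendsto (fun p => (Ncount p [g] : ℝ) / Ncount p [2]) (atTop ⊓ 𝓟 {p | p.Prime}) (𝓝 c) :=
    hc ▸ (tendsto_Ncount_div_Ncount_two hg hg0).mono_left inf_le_left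
  simp only [mem_insert, mem_singleton, forall_eq_or_imp, forall_eq]
  refine ⟨⟨key 10 ?_ ?_ ?_, key 20 ?_ ?_ ?_⟩, ⟨key 14 ?_ ?_ ?_, key 28 ?_ ?_ ?_⟩,
    key 22 ?_ ?_ ?_, key 26 ?_ ?_ ?_⟩ <;>
    first | decide | (simp [gapRatio, Nat.primeFactors]; norm_num)
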